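/- arXiv:2104.07510 — 2 statements merged into one kernel-verified Lean document; each statement's English description precedes it below -/
import Mathlib

section
/- Realignment criterion: If ρ is a separable density matrix on ℂ^{d_A} ⊗ ℂ^{d_B} (i.e., ρ = Σ_k p_k σ_k ⊗ τ_k for finitely many density matrices σ_k on ℂ^{d_A}, τ_k on ℂ^{d_B} and weights p_k ≥ 0 with Σ_k p_k = 1), then ‖R(ρ)‖_tr ≤ 1. -/
open Matrix Kronecker ComplexOrder

/-- Trace norm `‖X‖_tr = Tr √(X Xᴴ)`. -/
noncomputable def traceNorm {m n : Type*} [Fintype m] [Fintype n] [DecidableEq m]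
    (X : Matrix m n ℂ) : ℝ :=
  (((Matrix.posSemidef_self_mul_conjTranspose X).1.eigenvectorUnitary : Matrix m m ℂ) *
    diagonal (((↑) : ℝ → ℂ) ∘ (√·) ∘ (Matrix.posSemidef_self_mul_conjTranspose X).1.eigenvalues) *
    (star (Matrix.posSemidef_self_mul_conjTranspose X).1.eigenvectorUnitary : Matrix m m ℂ)).trace.re

/-- A density matrix: positive semidefinite with trace 1. -/
def IsDensityMatrix {n : Type*} [Fintype n] (ρ : Matrix n n ℂ) : Prop :=
  ρ.PosSemidef ∧ ρ.trace = 1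

/-- The realignment map: `R(ρ)_{(i,j),(k,l)} = ρ_{(i,k),(j,l)}`. -/
def realign {dA dB : ℕ} (ρ : Matrix (Fin dA × Fin dB) (Fin dA × Fin dB) ℂ) :
    Matrix (Fin dA × Fin dA) (Fin dB × Fin dB) ℂ :=
  fun p q => ρ (p.1, q.1) (p.2, q.2)

/-- Partial transpose on the second subsystem: `(ρ^{T₂})_{(i,k),(j,l)} = ρ_{(i,l),(j,k)}`. -/
def ptranspose2 {d : ℕ} (ρ : Matrix (Fin d × Fin d) (Fin d × Fin d) ℂ) :
    Matrix (Fin d × Fin d) (Fin d × Fin d) ℂ :=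
  fun p q => ρ (p.1, q.2) (q.1, p.2)

/-- The swap (exchange) operator `F_{(i,k),(j,l)} = δ_{il} δ_{kj}`. -/
def swapOp (d : ℕ) : Matrix (Fin d × Fin d) (Fin d × Fin d) ℂ :=
  fun p q => if p.1 = q.2 ∧ p.2 = q.1 then 1 else 0

/-- The unnormalized maximally entangled projector `(|Ω⟩⟨Ω|)_{(i,k),(j,l)} = δ_{ik} δ_{jl}`. -/
def omegaProj (d : ℕ) : Matrix (Fin d × Fin d) (Fin d × Fin d) ℂ :=
  fun p q => if p.1 = p.2 ∧ q.1 = q.2 then 1 else 0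

/-- Separability: `ρ` is a finite convex combination of products of density matrices. -/
def IsSeparableState {dA dB : ℕ} (ρ : Matrix (Fin dA × Fin dB) (Fin dA × Fin dB) ℂ) : Prop :=
  ∃ (m : ℕ) (p : Fin m → ℝ) (σ : Fin m → Matrix (Fin dA) (Fin dA) ℂ)
    (τ : Fin m → Matrix (Fin dB) (Fin dB) ℂ),
    (∀ k, 0 ≤ p k) ∧ (∑ k, p k = 1) ∧ (∀ k, IsDensityMatrix (σ k)) ∧
    (∀ k, IsDensityMatrix (τ k)) ∧ ρ = ∑ k, (p k : ℂ) • (σ k ⊗ₖ τ k)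

/-!
Write `‖X‖_tr = Re tr √(X Xᴴ)`. If `N` inverts `√(X Xᴴ)` on its support, then `M = N X` is a
contraction and `‖X‖_tr = Re tr (X Mᴴ)`. Against a contraction, a rank-one matrix `u wᵀ` pairs to
`|tr (u wᵀ Mᴴ)| = |⟨Mᴴ u, w⟩| ≤ ‖u‖ ‖w‖`, so `‖∑ₖ uₖ wₖᵀ‖_tr ≤ ∑ₖ ‖uₖ‖ ‖wₖ‖`. Realignment sends
`σ ⊗ τ` to the rank-one matrix `vec σᵀ (vec τᵀ)ᵀ`, and a density matrix has Frobenius norm at most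
`1` because `∑ λᵢ² ≤ (∑ λᵢ)² = 1`. Summing over a separable decomposition gives `∑ₖ pₖ = 1`.
-/

open scoped MatrixOrder
open Unitary

lemma inv_sqrt_mul_self_mul_inv_sqrt_le_one (x : ℝ) : (√x)⁻¹ * x * (√x)⁻¹ ≤ 1 := by
  rcases le_or_gt x 0 with hx | hx
  · simp [Real.sqrt_eq_zero'.mpr hx]
  · rw [mul_assoc, ← div_eq_mul_inv x, Real.div_sqrt, inv_mul_cancel₀ (Real.sqrt_pos.mpr hx).ne']

namespace Matrix

variable {𝕜 : Type*} [RCLike 𝕜] {m n : Type*} [Fintype m] [Fintype n]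

lemma trace_conjStarAlgAut [DecidableEq n] (U : unitaryGroup n 𝕜) (X : Matrix n n 𝕜) :
    (conjStarAlgAut 𝕜 _ U X).trace = X.trace := by
  rw [conjStarAlgAut_apply, trace_mul_cycle, coe_star_mul_self, one_mul]

lemma PosSemidef.re_trace_mul_self_le [DecidableEq n] {A : Matrix n n 𝕜} (hA : A.PosSemidef) :
    RCLike.re (A * A).trace ≤ RCLike.re A.trace ^ 2 := by
  have hsq : (A * A).trace = ∑ i, ((hA.1.eigenvalues i ^ 2 : ℝ) : 𝕜) := by
    have h := congrArg (fun B => (B * B).trace) hA.1.spectral_theorem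
    rw [h, ← map_mul, trace_conjStarAlgAut, diagonal_mul_diagonal, trace_diagonal]
    simp [sq]
  rw [hsq, hA.1.trace_eq_sum_eigenvalues, map_sum, map_sum]
  simp only [RCLike.ofReal_re]
  exact Finset.sum_sq_le_sq_sum_of_nonneg fun i _ => hA.eigenvalues_nonneg i

lemma norm_toLp_vec_sq (A : Matrix m n 𝕜) :
    ‖WithLp.toLp 2 (vec A)‖ ^ 2 = RCLike.re (Aᴴ * A).trace := by
  rw [← star_vec_dotProduct_vec, dotProduct_comm, ← EuclideanSpace.inner_toLp_toLp,
    inner_self_eq_norm_sq]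

lemma star_dotProduct_self_eq_norm_sq (x : n → 𝕜) :
    star x ⬝ᵥ x = ((‖WithLp.toLp 2 x‖ ^ 2 : ℝ) : 𝕜) := by
  rw [dotProduct_comm, ← EuclideanSpace.inner_toLp_toLp, inner_self_eq_norm_sq_to_K]
  simp

lemma norm_dotProduct_le (u v : n → 𝕜) :
    ‖u ⬝ᵥ v‖ ≤ ‖WithLp.toLp 2 u‖ * ‖WithLp.toLp 2 v‖ := by
  have h := norm_inner_le_norm (𝕜 := 𝕜) (WithLp.toLp 2 (star v)) (WithLp.toLp 2 u)
  rw [EuclideanSpace.inner_toLp_toLp, star_star] at h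
  simpa [EuclideanSpace.norm_eq, mul_comm] using h

lemma norm_conjTranspose_mulVec_le [DecidableEq m] {M : Matrix m n 𝕜} (hM : M * Mᴴ ≤ 1)
    (x : m → 𝕜) : ‖WithLp.toLp 2 (Mᴴ *ᵥ x)‖ ≤ ‖WithLp.toLp 2 x‖ := by
  have h := (le_iff.mp hM).dotProduct_mulVec_nonneg x
  rw [sub_mulVec, one_mulVec, dotProduct_sub, sub_nonneg, ← mulVec_mulVec, dotProduct_mulVec,
    ← conjTranspose_conjTranspose M, ← star_mulVec, conjTranspose_conjTranspose,
    star_dotProduct_self_eq_norm_sq, star_dotProduct_self_eq_norm_sq, RCLike.ofReal_le_ofReal] at h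
  exact (pow_le_pow_iff_left₀ (norm_nonneg _) (norm_nonneg _) two_ne_zero).mp h

lemma norm_trace_vecMulVec_mul_conjTranspose_le [DecidableEq m] {M : Matrix m n 𝕜}
    (hM : M * Mᴴ ≤ 1) (u : m → 𝕜) (w : n → 𝕜) :
    ‖(vecMulVec u w * Mᴴ).trace‖ ≤ ‖WithLp.toLp 2 u‖ * ‖WithLp.toLp 2 w‖ := by
  rw [trace_mul_comm, mul_vecMulVec, trace_vecMulVec]
  exact (norm_dotProduct_le _ _).trans
    (mul_le_mul_of_nonneg_right (norm_conjTranspose_mulVec_le hM u) (norm_nonneg _))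

/-- The witness is `cfc (√·)⁻¹ A`, an inverse square root of `A` on its support because
`(0 : ℝ)⁻¹ = 0`; every function is continuous on the finite spectrum of a matrix. -/
lemma IsHermitian.exists_mul_mul_le_one_and_mul_eq_cfc_sqrt [DecidableEq m] {A : Matrix m m 𝕜}
    (hA : A.IsHermitian) :
    ∃ N : Matrix m m 𝕜, Nᴴ = N ∧ N * A * N ≤ 1 ∧ A * N = cfc Real.sqrt A := by
  have hcont (f : ℝ → ℝ) : ContinuousOn f (spectrum ℝ A) := A.finite_real_spectrum.continuousOn f
  refine ⟨cfc (fun x => (√x)⁻¹) A, (cfc_predicate (p := IsSelfAdjoint) _ A).star_eq, ?_, ?_⟩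
  · nth_rewrite 2 [← cfc_id' ℝ A]
    rw [← cfc_mul _ _ A (hcont _) (hcont _), ← cfc_mul _ _ A (hcont _) (hcont _)]
    exact cfc_le_one _ A fun x _ => inv_sqrt_mul_self_mul_inv_sqrt_le_one x
  · nth_rewrite 1 [← cfc_id' ℝ A]
    rw [← cfc_mul _ _ A (hcont _) (hcont _)]
    simp only [← div_eq_mul_inv, Real.div_sqrt]

end Matrix

section TraceNorm

variable {m n : Type*} [Fintype m] [Fintype n] [DecidableEq m]

lemma traceNorm_eq_re_trace_cfc_sqrt (X : Matrix m n ℂ) :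
    traceNorm X = (cfc Real.sqrt (X * Xᴴ)).trace.re := by
  rw [(posSemidef_self_mul_conjTranspose X).1.cfc_eq, IsHermitian.cfc, conjStarAlgAut_apply]
  rfl

lemma exists_traceNorm_eq_re_trace_mul_conjTranspose (X : Matrix m n ℂ) :
    ∃ M : Matrix m n ℂ, M * Mᴴ ≤ 1 ∧ traceNorm X = (X * Mᴴ).trace.re := by
  obtain ⟨N, hN, hNAN, hAN⟩ :=
    (posSemidef_self_mul_conjTranspose X).1.exists_mul_mul_le_one_and_mul_eq_cfc_sqrt
  refine ⟨N * X, ?_, ?_⟩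
  · rw [conjTranspose_mul, hN]
    simpa only [Matrix.mul_assoc] using hNAN
  · rw [traceNorm_eq_re_trace_cfc_sqrt, ← hAN, conjTranspose_mul, hN, Matrix.mul_assoc]

lemma traceNorm_sum_vecMulVec_le {ι : Type*} [Fintype ι] (u : ι → m → ℂ) (w : ι → n → ℂ) :
    traceNorm (∑ k, vecMulVec (u k) (w k)) ≤
      ∑ k, ‖WithLp.toLp 2 (u k)‖ * ‖WithLp.toLp 2 (w k)‖ := by
  obtain ⟨M, hM, htr⟩ := exists_traceNorm_eq_re_trace_mul_conjTranspose (∑ k, vecMulVec (u k) (w k))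
  rw [htr, Matrix.sum_mul, trace_sum, Complex.re_sum]
  exact Finset.sum_le_sum fun k _ =>
    (Complex.re_le_norm _).trans (norm_trace_vecMulVec_mul_conjTranspose_le hM (u k) (w k))

end TraceNorm

lemma realign_sum_smul_kronecker {dA dB : ℕ} {ι : Type*} [Fintype ι] (p : ι → ℂ)
    (σ : ι → Matrix (Fin dA) (Fin dA) ℂ) (τ : ι → Matrix (Fin dB) (Fin dB) ℂ) :
    realign (∑ k, p k • (σ k ⊗ₖ τ k)) = ∑ k, vecMulVec (p k • vec (σ k)ᵀ) (vec (τ k)ᵀ) := by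
  ext
  simp [realign, Matrix.sum_apply, vecMulVec_apply]

lemma IsDensityMatrix.transpose {n : Type*} [Fintype n] {σ : Matrix n n ℂ}
    (h : IsDensityMatrix σ) : IsDensityMatrix σᵀ :=
  ⟨h.1.transpose, by rw [trace_transpose, h.2]⟩

lemma IsDensityMatrix.norm_toLp_vec_le_one {n : Type*} [Fintype n] [DecidableEq n]
    {σ : Matrix n n ℂ} (h : IsDensityMatrix σ) : ‖WithLp.toLp 2 (vec σ)‖ ≤ 1 := by
  have hsq : ‖WithLp.toLp 2 (vec σ)‖ ^ 2 ≤ 1 := by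
    rw [norm_toLp_vec_sq, h.1.1.eq]
    simpa [h.2] using h.1.re_trace_mul_self_le
  nlinarith [norm_nonneg (WithLp.toLp 2 (vec σ))]

theorem realignment_criterion_general {dA dB : ℕ}
    (ρ : Matrix (Fin dA × Fin dB) (Fin dA × Fin dB) ℂ)
    (hsep : IsSeparableState ρ) :
    traceNorm (realign ρ) ≤ 1 := by
  obtain ⟨m, p, σ, τ, hp, hpsum, hσ, hτ, rfl⟩ := hsep
  rw [realign_sum_smul_kronecker, ← hpsum]
  refine (traceNorm_sum_vecMulVec_le _ _).trans (Finset.sum_le_sum fun k _ => ?_)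
  rw [WithLp.toLp_smul, norm_smul, Complex.norm_real, Real.norm_of_nonneg (hp k), mul_assoc]
  exact mul_le_of_le_one_right (hp k) (mul_le_one₀ (hσ k).transpose.norm_toLp_vec_le_one
    (norm_nonneg _) (hτ k).transpose.norm_toLp_vec_le_one)

/-- **Realignment criterion.** If `ρ` is a separable density matrix, then
`‖R(ρ)‖_tr ≤ 1`. -/
theorem realignment_criterion {dA dB : ℕ}
    (ρ : Matrix (Fin dA × Fin dB) (Fin dA × Fin dB) ℂ)
    (hρ : IsDensityMatrix ρ) (hsep : IsSeparableState ρ) :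
    traceNorm (realign ρ) ≤ 1 :=
  realignment_criterion_general ρ hsep
end

section
/- Weak realignment criterion: for every bipartite density matrix ρ on ℂ^d ⊗ ℂ^d, the trace of the realigned matrix satisfies Tr R(ρ) = ⟨Ω| ρ |Ω⟩ and ‖R(ρ)‖_tr ≥ ⟨Ω| ρ |Ω⟩ (where ⟨Ω| ρ |Ω⟩ = Σ_{i,j} ρ_{(i,i),(j,j)} is a real number). Consequently, if ρ is separable (a convex combination of products of density matrices), then ⟨Ω| ρ |Ω⟩ ≤ 1. -/
/-!
Let `uᵢ` be an orthonormal eigenbasis of `X Xᴴ` with eigenvalues `λᵢ`. Then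
`Tr X = ∑ ⟪uᵢ, X uᵢ⟫` and `|⟪uᵢ, X uᵢ⟫| = |⟪Xᴴ uᵢ, uᵢ⟫| ≤ ‖Xᴴ uᵢ‖ = √λᵢ`, so `Re Tr X ≤ ‖X‖_tr`;
for `X = R(ρ)` the trace is `⟨Ω|ρ|Ω⟩`.

For a product state, `⟨Ω|σ ⊗ τ|Ω⟩ = ∑ σᵢⱼ τᵢⱼ`, which AM-GM bounds by the mean of the squared
Frobenius norms, and a density matrix has `‖σ‖_F² = ∑ λᵢ² ≤ (∑ λᵢ)² = 1`. Convexity then gives the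
bound for separable states.
-/

open Matrix Kronecker ComplexOrder

open scoped InnerProductSpace

namespace Matrix

variable {𝕜 m n ι : Type*} [RCLike 𝕜] [Fintype m] [Fintype n] [Fintype ι]

lemma trace_toEuclideanLin [DecidableEq n] (X : Matrix n n 𝕜) :
    LinearMap.trace 𝕜 (EuclideanSpace 𝕜 n) (toEuclideanLin X) = X.trace := by
  rw [← trace_toLin'_eq, ← LinearMap.trace_conj' _ (WithLp.linearEquiv 2 𝕜 (n → 𝕜)).symm]
  rfl

lemma trace_eq_sum_inner_toEuclideanLin [DecidableEq n] (X : Matrix n n 𝕜)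
    (b : OrthonormalBasis ι 𝕜 (EuclideanSpace 𝕜 n)) :
    X.trace = ∑ i, ⟪b i, toEuclideanLin X (b i)⟫_𝕜 := by
  rw [← trace_toEuclideanLin, LinearMap.trace_eq_sum_inner _ b]

lemma inner_toEuclideanLin_mul_conjTranspose_self [DecidableEq m] [DecidableEq n]
    (X : Matrix m n 𝕜) (u : EuclideanSpace 𝕜 m) :
    ⟪u, toEuclideanLin (X * Xᴴ) u⟫_𝕜 = (‖toEuclideanLin Xᴴ u‖ ^ 2 : 𝕜) := by
  have hX : toEuclideanLin X = (toEuclideanLin Xᴴ).adjoint := by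
    simpa using toEuclideanLin_conjTranspose_eq_adjoint Xᴴ
  rw [toLpLin_mul_same, LinearMap.comp_apply, hX, LinearMap.adjoint_inner_right,
    inner_self_eq_norm_sq_to_K]

lemma trace_mul_conjTranspose_self_eq_sum_norm_sq [DecidableEq m] [DecidableEq n]
    (X : Matrix m n 𝕜) (b : OrthonormalBasis ι 𝕜 (EuclideanSpace 𝕜 m)) :
    (X * Xᴴ).trace = ∑ i, (‖toEuclideanLin Xᴴ (b i)‖ ^ 2 : 𝕜) := by
  simp_rw [trace_eq_sum_inner_toEuclideanLin _ b, inner_toEuclideanLin_mul_conjTranspose_self]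

lemma re_trace_mul_conjTranspose_self (X : Matrix m n 𝕜) :
    RCLike.re (X * Xᴴ).trace = ∑ i, ∑ j, ‖X i j‖ ^ 2 := by
  simp [trace, mul_apply, RCLike.mul_conj]

lemma IsHermitian.toEuclideanLin_eigenvectorBasis [DecidableEq n] {A : Matrix n n 𝕜}
    (hA : A.IsHermitian) (i : n) :
    toEuclideanLin A (hA.eigenvectorBasis i) = hA.eigenvalues i • hA.eigenvectorBasis i := by
  rw [toLpLin_apply, hA.mulVec_eigenvectorBasis]
  rfl

lemma norm_toEuclideanLin_conjTranspose_eigenvectorBasis [DecidableEq m] [DecidableEq n]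
    (X : Matrix m n 𝕜) (i : m) :
    ‖toEuclideanLin Xᴴ ((posSemidef_self_mul_conjTranspose X).1.eigenvectorBasis i)‖ =
      √((posSemidef_self_mul_conjTranspose X).1.eigenvalues i) := by
  set hH := (posSemidef_self_mul_conjTranspose X).1
  have h := inner_toEuclideanLin_mul_conjTranspose_self X (hH.eigenvectorBasis i)
  rw [hH.toEuclideanLin_eigenvectorBasis, inner_smul_right_eq_smul, inner_self_eq_norm_sq_to_K,
    hH.eigenvectorBasis.orthonormal.1 i, RCLike.ofReal_one, one_pow, RCLike.real_smul_eq_coe_mul,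
    mul_one, ← RCLike.ofReal_pow, RCLike.ofReal_inj] at h
  rw [h, Real.sqrt_sq (norm_nonneg _)]

lemma PosSemidef.sum_norm_sq_le_re_trace_sq [DecidableEq n] {A : Matrix n n 𝕜}
    (hA : A.PosSemidef) : ∑ i, ∑ j, ‖A i j‖ ^ 2 ≤ (RCLike.re A.trace) ^ 2 := by
  have hsq : ∑ i, ∑ j, ‖A i j‖ ^ 2 = ∑ i, hA.1.eigenvalues i ^ 2 := by
    rw [← re_trace_mul_conjTranspose_self,
      trace_mul_conjTranspose_self_eq_sum_norm_sq A hA.1.eigenvectorBasis, hA.1.eq]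
    simp [hA.1.toEuclideanLin_eigenvectorBasis, norm_smul]
  rw [hsq, hA.1.trace_eq_sum_eigenvalues, map_sum]
  simp_rw [RCLike.ofReal_re]
  exact Finset.sum_sq_le_sq_sum_of_nonneg fun i _ ↦ hA.eigenvalues_nonneg i

end Matrix

lemma traceNorm_eq_sum_sqrt_eigenvalues {m n : Type*} [Fintype m] [Fintype n] [DecidableEq m]
    (X : Matrix m n ℂ) :
    traceNorm X = ∑ i, √((posSemidef_self_mul_conjTranspose X).1.eigenvalues i) := by
  rw [traceNorm, trace_mul_cycle, Unitary.coe_star_mul_self, one_mul, trace_diagonal]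
  simp

lemma re_trace_le_traceNorm {n : Type*} [Fintype n] [DecidableEq n] (X : Matrix n n ℂ) :
    X.trace.re ≤ traceNorm X := by
  set b := (posSemidef_self_mul_conjTranspose X).1.eigenvectorBasis
  rw [traceNorm_eq_sum_sqrt_eigenvalues, trace_eq_sum_inner_toEuclideanLin X b, Complex.re_sum]
  gcongr with i
  calc (⟪b i, toEuclideanLin X (b i)⟫_ℂ).re
      ≤ ‖⟪b i, toEuclideanLin X (b i)⟫_ℂ‖ := Complex.re_le_norm _
    _ = ‖⟪toEuclideanLin Xᴴ (b i), b i⟫_ℂ‖ := by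
      rw [toEuclideanLin_conjTranspose_eq_adjoint, LinearMap.adjoint_inner_left]
    _ ≤ ‖toEuclideanLin Xᴴ (b i)‖ * ‖b i‖ := norm_inner_le_norm _ _
    _ = _ := by
      rw [norm_toEuclideanLin_conjTranspose_eigenvectorBasis, b.orthonormal.1 i, mul_one]

lemma IsDensityMatrix.sum_norm_sq_le_one {n : Type*} [Fintype n] {σ : Matrix n n ℂ}
    (hσ : IsDensityMatrix σ) : ∑ i, ∑ j, ‖σ i j‖ ^ 2 ≤ 1 := by
  classical
  simpa [hσ.2] using hσ.1.sum_norm_sq_le_re_trace_sq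

lemma IsDensityMatrix.norm_sum_mul_le_one {n : Type*} [Fintype n] {σ τ : Matrix n n ℂ}
    (hσ : IsDensityMatrix σ) (hτ : IsDensityMatrix τ) : ‖∑ i, ∑ j, σ i j * τ i j‖ ≤ 1 := by
  have h := add_le_add hσ.sum_norm_sq_le_one hτ.sum_norm_sq_le_one
  calc ‖∑ i, ∑ j, σ i j * τ i j‖ ≤ ∑ i, ∑ j, ‖σ i j‖ * ‖τ i j‖ := by
        refine (norm_sum_le _ _).trans (Finset.sum_le_sum fun i _ ↦ ?_)
        exact (norm_sum_le _ _).trans_eq (by simp_rw [norm_mul])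
    _ ≤ ∑ i, ∑ j, (‖σ i j‖ ^ 2 + ‖τ i j‖ ^ 2) / 2 := by
        gcongr with i _ j _
        linarith [two_mul_le_add_sq ‖σ i j‖ ‖τ i j‖]
    _ ≤ 1 := by
        simp_rw [add_div, Finset.sum_add_distrib, ← Finset.sum_div]
        linarith

lemma sum_diag_sum_smul_kronecker {n ι : Type*} [Fintype n] [Fintype ι] (c : ι → ℂ)
    (σ τ : ι → Matrix n n ℂ) :
    ∑ i, ∑ j, (∑ k, c k • (σ k ⊗ₖ τ k)) (i, i) (j, j) =
      ∑ k, c k * ∑ i, ∑ j, σ k i j * τ k i j := by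
  simp only [Matrix.sum_apply, Matrix.smul_apply, kroneckerMap_apply, smul_eq_mul, Finset.mul_sum]
  exact (Finset.sum_congr rfl fun i _ ↦ Finset.sum_comm).trans Finset.sum_comm

lemma IsSeparableState.re_sum_diag_le_one {d : ℕ} {ρ : Matrix (Fin d × Fin d) (Fin d × Fin d) ℂ}
    (hρ : IsSeparableState ρ) : (∑ i, ∑ j, ρ (i, i) (j, j)).re ≤ 1 := by
  obtain ⟨m, p, σ, τ, hp, hp1, hσ, hτ, rfl⟩ := hρ
  rw [sum_diag_sum_smul_kronecker, Complex.re_sum]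
  calc ∑ k, ((p k : ℂ) * ∑ i, ∑ j, σ k i j * τ k i j).re
      = ∑ k, p k * (∑ i, ∑ j, σ k i j * τ k i j).re := by simp_rw [Complex.re_ofReal_mul]
    _ ≤ ∑ k, p k * 1 := Finset.sum_le_sum fun k _ ↦ mul_le_mul_of_nonneg_left
      ((Complex.re_le_norm _).trans ((hσ k).norm_sum_mul_le_one (hτ k))) (hp k)
    _ = 1 := by simp [hp1]

lemma trace_realign {d : ℕ} (ρ : Matrix (Fin d × Fin d) (Fin d × Fin d) ℂ) :
    (realign ρ).trace = ∑ i, ∑ j, ρ (i, i) (j, j) := by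
  rw [trace, ← Fintype.sum_prod_type']
  rfl

theorem weak_realignment_criterion_general {d : ℕ}
    (ρ : Matrix (Fin d × Fin d) (Fin d × Fin d) ℂ) :
    (realign ρ).trace = ∑ i, ∑ j, ρ (i, i) (j, j) ∧
    (∑ i, ∑ j, ρ (i, i) (j, j)).re ≤ traceNorm (realign ρ) ∧
    (IsSeparableState ρ → (∑ i, ∑ j, ρ (i, i) (j, j)).re ≤ 1) :=
  ⟨trace_realign ρ, trace_realign ρ ▸ re_trace_le_traceNorm (realign ρ),
    IsSeparableState.re_sum_diag_le_one⟩

/-- **Weak realignment criterion:** `Tr R(ρ) = ⟨Ω|ρ|Ω⟩`, `‖R(ρ)‖_tr ≥ ⟨Ω|ρ|Ω⟩`, and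
for separable `ρ`, `⟨Ω|ρ|Ω⟩ ≤ 1`. -/
theorem weak_realignment_criterion {d : ℕ}
    (ρ : Matrix (Fin d × Fin d) (Fin d × Fin d) ℂ)
    (hρ : IsDensityMatrix ρ) :
    (realign ρ).trace = ∑ i, ∑ j, ρ (i, i) (j, j) ∧
    (∑ i, ∑ j, ρ (i, i) (j, j)).re ≤ traceNorm (realign ρ) ∧
    (IsSeparableState ρ → (∑ i, ∑ j, ρ (i, i) (j, j)).re ≤ 1) :=
  weak_realignment_criterion_general ρ
end
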